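/- For n ≥ 4, the Lucas cube Λ_n admits no perfect code; combined with the easy cases, Λ_n admits a perfect code if and only if n ≤ 3. -/

import Mathlib

def isFib {n : ℕ} (b : Fin n → Bool) : Prop :=
  ∀ i : Fin n, ∀ h : (i : ℕ) + 1 < n, ¬(b i = true ∧ b ⟨(i : ℕ) + 1, h⟩ = true)

def isLucas {n : ℕ} (b : Fin n → Bool) : Prop :=
  isFib b ∧ ∀ h0 : 0 < n, ¬(b ⟨0, h0⟩ = true ∧ b ⟨n - 1, by omega⟩ = true)

def wt {n : ℕ} (b : Fin n → Bool) : ℕ :=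
  (Finset.univ.filter fun i => b i = true).card

def lucasCube (n : ℕ) : SimpleGraph {b : Fin n → Bool // isLucas b} where
  Adj x y := hammingDist x.1 y.1 = 1
  symm := ⟨fun x y h => by show hammingDist y.1 x.1 = 1; rw [hammingDist_comm]; exact h⟩
  loopless := ⟨fun x h => by
    have h' : hammingDist x.1 x.1 = 1 := h
    simp only [hammingDist_self] at h'; exact absurd h' (by omega)⟩

def IsPerfectCode {V : Type*} (G : SimpleGraph V) (C : Set V) : Prop :=
  ∀ v : V, ∃! c : V, c ∈ C ∧ (v = c ∨ G.Adj v c)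

def ch (a b : ℤ) : ℕ := if 0 ≤ a ∧ 0 ≤ b then a.toNat.choose b.toNat else 0

/-!
Identify a Lucas string with its support, a cyclically independent subset of `Fin n`; two
strings are adjacent iff one support covers the other. In a perfect code `C`, fix a set `A` of
coordinates and a weight `k`, and suppose no codeword of weight `k - 1` lies below a weight-`k`
string containing `A`. Then each weight-`k` string containing `A` is dominated either by itself
or by a weight-`(k + 1)` codeword containing `A`, which dominates exactly `k + 1 - #A` of them.

If the zero string is a codeword, there are no codewords of weight 1 or 2, and counting at the
coordinate `0` in weights 2 and 3 gives `n - 3 = 2 x` and `(n - 4)(n - 5) = 2 x + 6 y`, which is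
impossible modulo 3. Otherwise the zero string is dominated by a unique codeword `{a}`; counting
all strings of weight 1 gives `n = 1 + 2 y`, while counting at the coordinate `a + 1` in weights
1 and 2 gives `n - 3 = 1 + 2 z`, contradicting parity. For `n ≤ 3` every nonzero Lucas string has
weight 1, so the zero string alone is a perfect code.
-/

open Finset
open scoped symmDiff

namespace IsPerfectCode

variable {V : Type*} {G : SimpleGraph V} {C : Set V}

lemma eq_of_mem_of_mem (hC : IsPerfectCode G C) {v c c' : V} (hc : c ∈ C)
    (hvc : v = c ∨ G.Adj v c) (hc' : c' ∈ C) (hvc' : v = c' ∨ G.Adj v c') : c = c' :=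
  (hC v).unique ⟨hc, hvc⟩ ⟨hc', hvc'⟩

lemma not_adj (hC : IsPerfectCode G C) {c c' : V} (hc : c ∈ C) (hc' : c' ∈ C) :
    ¬ G.Adj c c' := fun h =>
  G.ne_of_adj h (hC.eq_of_mem_of_mem hc (.inl rfl) hc' (.inr h))

lemma card_eq_sum_card_dominated [Fintype V] [DecidableEq V] [DecidableRel G.Adj]
    [DecidablePred (· ∈ C)] (hC : IsPerfectCode G C) (s : Finset V) :
    #s = ∑ c ∈ {c | c ∈ C}, #{v ∈ s | v = c ∨ G.Adj v c} := by
  choose center hcenter hunique using hC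
  rw [card_eq_sum_card_fiberwise (f := center) (t := {c | c ∈ C})
    fun v _ => by simpa using (hcenter v).1]
  refine sum_congr rfl fun c hc => congrArg card (filter_congr fun v _ => ?_)
  exact ⟨fun h => h ▸ (hcenter v).2, fun h => (hunique v c ⟨by simpa using hc, h⟩).symm⟩

end IsPerfectCode

lemma Finset.card_symmDiff_eq_one_iff {α : Type*} [DecidableEq α] {s t : Finset α} :
    #(s ∆ t) = 1 ↔ s ⋖ t ∨ t ⋖ s := by
  rw [symmDiff_def, sup_eq_union, card_union_of_disjoint disjoint_sdiff_sdiff,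
    covBy_iff_card_sdiff_eq_one, covBy_iff_card_sdiff_eq_one, ← sdiff_eq_empty_iff_subset,
    ← sdiff_eq_empty_iff_subset, ← card_eq_zero, ← card_eq_zero]
  omega

lemma CovBy.card_finset_eq {α : Type*} {s t : Finset α} (h : s ⋖ t) : #t = #s + 1 :=
  (Order.covBy_iff_add_one_eq.1 h.card_finset).symm

lemma Fin.val_add_one_eq_ite {n : ℕ} [NeZero n] (i : Fin n) :
    (i + 1).val = if i.val + 1 = n then 0 else i.val + 1 := by
  rw [Fin.val_add, Fin.val_one', Nat.add_mod_mod]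
  split_ifs with h
  · rw [h, Nat.mod_self]
  · exact Nat.mod_eq_of_lt (by omega)

/-- Modulo 3, with `m = n - 5`, the equation reads `m ^ 2 = 2`. -/
lemma sub_four_mul_sub_five_ne (n z : ℕ) (hn : 4 ≤ n) :
    (n - 4) * (n - 5) ≠ n - 3 + 6 * z := by
  obtain rfl | ⟨m, rfl⟩ : n = 4 ∨ ∃ m, n = m + 5 := by
    rcases Nat.lt_or_ge n 5 with h | h
    · exact .inl (by omega)
    · exact .inr ⟨n - 5, by omega⟩
  · omega
  intro h
  rw [show m + 5 - 4 = m + 1 by omega, show m + 5 - 5 = m by omega,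
    show m + 5 - 3 = m + 2 by omega] at h
  have h3 := congrArg (fun x : ℕ => (x : ZMod 3)) h
  push_cast at h3
  generalize (m : ZMod 3) = q at h3
  generalize (z : ZMod 3) = r at h3
  revert q r
  decide

def IsCyclicIndep {n : ℕ} [NeZero n] (s : Finset (Fin n)) : Prop :=
  ∀ i ∈ s, i + 1 ∉ s

lemma IsCyclicIndep.mono {n : ℕ} [NeZero n] {s t : Finset (Fin n)} (ht : IsCyclicIndep t)
    (hst : s ⊆ t) : IsCyclicIndep s :=
  fun i hi hi' => ht i (hst hi) (hst hi')

namespace LucasCube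

open scoped Classical

variable {n : ℕ}

abbrev Vertex (n : ℕ) := {b : Fin n → Bool // isLucas b}

def support (v : Vertex n) : Finset (Fin n) := {i | v.1 i}

@[simp] lemma mem_support {v : Vertex n} {i : Fin n} : i ∈ support v ↔ v.1 i := by
  simp [support]

lemma support_injective : Function.Injective (support (n := n)) := fun v w h =>
  Subtype.ext <| funext fun i => Bool.eq_iff_iff.2 <| by simpa using congrArg (i ∈ ·) h

lemma hammingDist_eq_card_symmDiff (v w : Vertex n) :
    hammingDist v.1 w.1 = #(support v ∆ support w) := by
  unfold hammingDist
  congr 1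
  ext i
  simp only [mem_filter, mem_univ, true_and, mem_symmDiff, mem_support]
  cases v.1 i <;> cases w.1 i <;> decide

lemma adj_iff_covBy {v w : Vertex n} :
    (lucasCube n).Adj v w ↔ support v ⋖ support w ∨ support w ⋖ support v := by
  rw [← Finset.card_symmDiff_eq_one_iff, ← hammingDist_eq_card_symmDiff]
  rfl

lemma adj_of_subset {v w : Vertex n} (hvw : support v ⊆ support w)
    (hcard : #(support w) = #(support v) + 1) : (lucasCube n).Adj v w :=
  adj_iff_covBy.2 <| .inl <| covBy_iff_card_sdiff_eq_one.2
    ⟨hvw, by rw [card_sdiff_of_subset hvw, hcard, Nat.add_sub_cancel_left]⟩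

def empty : Vertex n := ⟨fun _ => false, fun _ _ h => by simp at h, fun _ h => by simp at h⟩

@[simp] lemma support_empty : support (empty : Vertex n) = ∅ := by ext; simp [empty]

lemma eq_empty_iff {v : Vertex n} : v = empty ↔ support v = ∅ :=
  ⟨fun h => h ▸ support_empty, fun h => support_injective (h.trans support_empty.symm)⟩

lemma empty_adj_of_card_eq_one {v : Vertex n} (hv : #(support v) = 1) :
    (lucasCube n).Adj empty v :=
  adj_of_subset (by simp) (by simp [hv])

noncomputable def shape (A : Finset (Fin n)) (k : ℕ) : Finset (Vertex n) :=
  {v | A ⊆ support v ∧ #(support v) = k}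

@[simp] lemma mem_shape {A : Finset (Fin n)} {k : ℕ} {v : Vertex n} :
    v ∈ shape A k ↔ A ⊆ support v ∧ #(support v) = k := by
  simp [shape]

lemma not_covBy_of_card_ne {C : Set (Vertex n)} {A : Finset (Fin n)} {k : ℕ}
    (hC : ∀ c ∈ C, #(support c) + 1 ≠ k) :
    ∀ c ∈ C, ∀ v ∈ shape A k, ¬ support c ⋖ support v :=
  fun c hc v hv h => hC c hc (by rw [← h.card_finset_eq, (mem_shape.1 hv).2])

section NeZero

variable [NeZero n]

lemma isLucas_iff (b : Fin n → Bool) : isLucas b ↔ ∀ i, b i → b (i + 1) = false := by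
  have hpos : 0 < n := Nat.pos_of_neZero n
  have hsucc (i : Fin n) (hlt : i.val + 1 < n) : i + 1 = ⟨i + 1, hlt⟩ := by
    ext; rw [Fin.val_add_one_eq_ite, if_neg (by omega)]
  have hlast : (⟨n - 1, by omega⟩ + 1 : Fin n) = ⟨0, hpos⟩ := by
    ext; rw [Fin.val_add_one_eq_ite, if_pos (by simp; omega)]
  constructor
  · rintro ⟨hfib, hends⟩ i hi
    rw [Bool.eq_false_iff]
    intro hi1
    by_cases hlt : i.val + 1 < n
    · exact hfib i hlt ⟨hi, hsucc i hlt ▸ hi1⟩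
    · obtain rfl : i = ⟨n - 1, Nat.sub_lt hpos Nat.one_pos⟩ := Fin.ext (by simp; omega)
      exact hends hpos ⟨hlast ▸ hi1, hi⟩
  · intro h
    refine ⟨fun i hlt hi => ?_, fun _ hi => ?_⟩
    · exact Bool.false_ne_true ((hsucc i hlt ▸ h i hi.1).symm.trans hi.2)
    · exact Bool.false_ne_true ((hlast ▸ h _ hi.2).symm.trans hi.1)

lemma isCyclicIndep_support (v : Vertex n) : IsCyclicIndep (support v) := fun i hi hi' => by
  simp only [mem_support] at hi hi'
  simp [(isLucas_iff _).1 v.2 i hi] at hi'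

def ofFinset (s : Finset (Fin n)) (hs : IsCyclicIndep s) : Vertex n :=
  ⟨fun i => decide (i ∈ s), (isLucas_iff _).2 fun i hi => by
    simpa using hs i (by simpa using hi)⟩

@[simp] lemma support_ofFinset (s : Finset (Fin n)) (hs : IsCyclicIndep s) :
    support (ofFinset s hs) = s := by
  ext; simp [ofFinset]

lemma eq_ofFinset_iff {v : Vertex n} {s : Finset (Fin n)} {hs : IsCyclicIndep s} :
    v = ofFinset s hs ↔ support v = s :=
  ⟨fun h => h ▸ support_ofFinset s hs, fun h => support_injective (by simpa using h)⟩

lemma filter_dominated_shape_succ_eq_image {A : Finset (Fin n)} {k : ℕ} {c : Vertex n}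
    (hc : c ∈ shape A (k + 1)) :
    {v ∈ shape A k | v = c ∨ (lucasCube n).Adj v c} = (support c \ A).image fun j =>
      ofFinset ((support c).erase j) ((isCyclicIndep_support c).mono (erase_subset j _)) := by
  rw [mem_shape] at hc
  ext v
  simp only [mem_filter, mem_shape, mem_image, mem_sdiff, eq_comm (b := v), eq_ofFinset_iff,
    adj_iff_covBy]
  constructor
  · rintro ⟨⟨hAv, hvk⟩, rfl | hv | hv⟩
    · omega
    · obtain ⟨j, hj, hjv⟩ := hv.exists_finset_erase
      exact ⟨j, ⟨hj, fun hjA => by simpa [← hjv] using hAv hjA⟩, hjv.symm⟩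
    · have := hv.card_finset_eq
      omega
  · rintro ⟨j, ⟨hj, hjA⟩, hjv⟩
    rw [hjv]
    refine ⟨⟨fun i hi => mem_erase.2 ⟨fun hij => hjA (hij ▸ hi), hc.1 hi⟩, ?_⟩,
      Or.inr (Or.inl (erase_covBy hj))⟩
    rw [card_erase_of_mem hj, hc.2, Nat.add_sub_cancel]

lemma card_filter_dominated_shape {A : Finset (Fin n)} {k : ℕ} {c : Vertex n}
    (hc : ∀ v ∈ shape A k, ¬ support c ⋖ support v) :
    #{v ∈ shape A k | v = c ∨ (lucasCube n).Adj v c} =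
      (if c ∈ shape A k then 1 else 0) + if c ∈ shape A (k + 1) then k + 1 - #A else 0 := by
  by_cases hck : c ∈ shape A k
  · have hck' : c ∉ shape A (k + 1) := fun h => by simp_all
    rw [if_pos hck, if_neg hck', card_eq_one]
    refine ⟨c, eq_singleton_iff_unique_mem.2
      ⟨mem_filter.2 ⟨hck, Or.inl rfl⟩, fun v hv => ?_⟩⟩
    obtain ⟨hvk, rfl | hadj⟩ := mem_filter.1 hv
    · rfl
    · rcases adj_iff_covBy.1 hadj with h | h <;>
      · have := h.card_finset_eq
        simp_all
  by_cases hck1 : c ∈ shape A (k + 1)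
  · rw [if_neg hck, if_pos hck1, filter_dominated_shape_succ_eq_image hck1,
      card_image_of_injOn, card_sdiff_of_subset (mem_shape.1 hck1).1, (mem_shape.1 hck1).2]
    · simp
    · intro i hi j hj hij
      exact erase_injOn (support c) (mem_sdiff.1 hi).1 (mem_sdiff.1 hj).1
        (by simpa using congrArg support hij)
  rw [if_neg hck, if_neg hck1, card_eq_zero, filter_eq_empty_iff]
  rintro v hv (rfl | hadj)
  · exact hck hv
  rcases adj_iff_covBy.1 hadj with h | h
  · exact hck1 (mem_shape.2 ⟨(mem_shape.1 hv).1.trans h.le, by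
      rw [h.card_finset_eq, (mem_shape.1 hv).2]⟩)
  · exact hc v hv h

theorem card_shape_eq_of_isPerfectCode {C : Set (Vertex n)}
    (hC : IsPerfectCode (lucasCube n) C)
    {A : Finset (Fin n)} {k : ℕ}
    (hcov : ∀ c ∈ C, ∀ v ∈ shape A k, ¬ support c ⋖ support v) :
    #(shape A k) =
      #{c ∈ shape A k | c ∈ C} + (k + 1 - #A) * #{c ∈ shape A (k + 1) | c ∈ C} := by
  rw [hC.card_eq_sum_card_dominated,
    sum_congr rfl fun c hc => card_filter_dominated_shape (hcov c (by simpa using hc)),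
    sum_add_distrib, sum_ite_mem, sum_ite_mem, sum_const, sum_const]
  simp [inter_comm, inter_filter, mul_comm]

lemma card_shape_eq_card_isCyclicIndep (A : Finset (Fin n)) (k : ℕ) :
    #(shape A k) = #{s : Finset (Fin n) | IsCyclicIndep s ∧ A ⊆ s ∧ #s = k} := by
  refine card_bij (fun v _ => support v) (fun v hv => ?_) (fun v _ w _ h => support_injective h)
    fun s hs => ?_
  · simpa [isCyclicIndep_support] using hv
  · simp only [mem_filter, mem_univ, true_and] at hs
    exact ⟨ofFinset s hs.1, by simpa using hs.2, support_ofFinset s hs.1⟩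

lemma add_one_ne_self (hn : 2 ≤ n) (i : Fin n) : i + 1 ≠ i := by
  rw [Ne, Fin.ext_iff, Fin.val_add_one_eq_ite]
  split_ifs <;> omega

lemma add_one_add_one_ne_self (hn : 3 ≤ n) (i : Fin n) : i + 1 + 1 ≠ i := by
  rw [Ne, Fin.ext_iff]
  have h₁ := Fin.val_add_one_eq_ite i
  have h₂ := Fin.val_add_one_eq_ite (i + 1)
  split_ifs at h₁ h₂ <;> omega

lemma isCyclicIndep_singleton (hn : 2 ≤ n) (i : Fin n) : IsCyclicIndep {i} := by
  simpa [IsCyclicIndep] using add_one_ne_self hn i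

lemma isCyclicIndep_pair_iff (hn : 2 ≤ n) {i j : Fin n} :
    IsCyclicIndep {i, j} ↔ j ≠ i + 1 ∧ i ≠ j + 1 := by
  simp only [IsCyclicIndep, mem_insert, mem_singleton, forall_eq_or_imp, forall_eq,
    add_one_ne_self hn, false_or, or_false]
  grind

lemma card_shape_empty_one (hn : 2 ≤ n) : #(shape (∅ : Finset (Fin n)) 1) = n := by
  rw [card_shape_eq_card_isCyclicIndep]
  calc _ = #(univ.map ⟨singleton, singleton_injective⟩ : Finset (Finset (Fin n))) := by
        congr 1
        ext s
        simp only [mem_filter, mem_univ, true_and, empty_subset, mem_map, card_eq_one]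
        constructor
        · rintro ⟨-, a, rfl⟩
          exact ⟨a, rfl⟩
        · rintro ⟨a, rfl⟩
          exact ⟨isCyclicIndep_singleton hn a, a, rfl⟩
    _ = n := by simp

lemma card_shape_singleton_one (hn : 2 ≤ n) (i : Fin n) : #(shape {i} 1) = 1 := by
  rw [card_shape_eq_card_isCyclicIndep, card_eq_one]
  refine ⟨{i}, eq_singleton_iff_unique_mem.2
    ⟨by simp [isCyclicIndep_singleton hn], fun s hs => ?_⟩⟩
  simp only [mem_filter, mem_univ, true_and] at hs
  exact (eq_of_subset_of_card_le hs.2.1 (by simp [hs.2.2])).symm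

lemma card_shape_singleton_two (hn : 3 ≤ n) (i : Fin n) : #(shape {i} 2) = n - 3 := by
  have hn₂ : 2 ≤ n := by omega
  have hcard : #({i - 1, i, i + 1} : Finset (Fin n)) = 3 := by
    have h₁ : i - 1 ≠ i := fun h => add_one_ne_self hn₂ (i - 1) (by rw [sub_add_cancel, h])
    have h₂ : i - 1 ≠ i + 1 := fun h =>
      add_one_add_one_ne_self hn i (by rw [← h, sub_add_cancel])
    rw [card_insert_of_notMem (by simp [h₁, h₂]), card_pair (add_one_ne_self hn₂ i).symm]
  rw [card_shape_eq_card_isCyclicIndep]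
  calc _ = #(({i - 1, i, i + 1}ᶜ : Finset (Fin n)).image fun j => ({i, j} : Finset (Fin n))) := by
        congr 1
        ext s
        simp only [mem_filter, mem_univ, true_and, singleton_subset_iff, mem_image, mem_compl,
          mem_insert, mem_singleton, not_or]
        constructor
        · rintro ⟨hs, hi, h2⟩
          obtain ⟨j, hj⟩ := card_eq_one.1 (by rw [card_erase_of_mem hi, h2] : #(s.erase i) = 1)
          have hji : j ≠ i := by simpa using (mem_erase.1 (hj ▸ mem_singleton_self j)).1
          have hsij : s = {i, j} := by rw [← insert_erase hi, hj]
          rw [hsij, isCyclicIndep_pair_iff hn₂] at hs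
          exact ⟨j, ⟨fun h => hs.2 (by rw [h, sub_add_cancel]), hji, hs.1⟩, hsij.symm⟩
        · rintro ⟨j, ⟨hj₁, hji, hj₂⟩, rfl⟩
          refine ⟨(isCyclicIndep_pair_iff hn₂).2 ⟨hj₂, fun h => hj₁ ?_⟩, by simp,
            card_pair (Ne.symm hji)⟩
          rw [h, add_sub_cancel_right]
    _ = n - 3 := by
        rw [card_image_of_injOn, card_compl, Fintype.card_fin, hcard]
        intro j hj j' _ h
        have : j ∈ ({i, j'} : Finset (Fin n)) := by
          rw [← show ({i, j} : Finset (Fin n)) = {i, j'} from h]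
          simp
        simp only [coe_compl, Set.mem_compl_iff, mem_coe, mem_insert, mem_singleton,
          not_or] at hj
        simpa [hj.2.1] using this

lemma isCyclicIndep_zero_triple_iff {x y : Fin n} (hx : 0 < x.val) (hxy : x.val < y.val) :
    IsCyclicIndep {0, x, y} ↔ 2 ≤ x.val ∧ x.val + 2 ≤ y.val ∧ y.val + 2 ≤ n := by
  simp only [IsCyclicIndep, mem_insert, mem_singleton, forall_eq_or_imp, forall_eq]
  simp only [Fin.ext_iff]
  have := y.isLt
  have h0 := Fin.val_zero n
  have h01 := Fin.val_add_one_eq_ite (0 : Fin n)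
  have hx1 := Fin.val_add_one_eq_ite x
  have hy1 := Fin.val_add_one_eq_ite y
  split_ifs at h01 hx1 hy1 <;> omega

lemma card_zero_triple {x y : Fin n} (hx : 0 < x.val) (hxy : x.val < y.val) :
    #({0, x, y} : Finset (Fin n)) = 3 := by
  have h0 := Fin.val_zero n
  rw [card_eq_three]
  exact ⟨0, x, y, by simp [Fin.ext_iff]; omega, by simp [Fin.ext_iff]; omega,
    by simp [Fin.ext_iff]; omega, rfl⟩

lemma eq_of_zero_triple_eq {x y x' y' : Fin n} (hx : 0 < x.val) (hxy : x.val < y.val)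
    (hx' : 0 < x'.val) (hxy' : x'.val < y'.val)
    (h : ({0, x, y} : Finset (Fin n)) = {0, x', y'}) : x = x' ∧ y = y' := by
  have hmem (z : Fin n) :
      z ∈ ({0, x, y} : Finset (Fin n)) ↔ z ∈ ({0, x', y'} : Finset (Fin n)) := by
    rw [h]
  have h1 := (hmem x).1 (by simp)
  have h2 := (hmem y).1 (by simp)
  have h3 := (hmem x').2 (by simp)
  have h4 := (hmem y').2 (by simp)
  simp only [mem_insert, mem_singleton, Fin.ext_iff, Fin.val_zero] at h1 h2 h3 h4 ⊢
  omega

lemma exists_eq_zero_triple {s : Finset (Fin n)} (hs : IsCyclicIndep s) (h0 : 0 ∈ s)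
    (h3 : #s = 3) :
    ∃ x y : Fin n, 2 ≤ x.val ∧ x.val + 2 ≤ y.val ∧ y.val + 2 ≤ n ∧ s = {0, x, y} := by
  obtain ⟨x, y, hxy, hxy'⟩ :=
    card_eq_two.1 (by rw [card_erase_of_mem h0, h3] : #(s.erase 0) = 2)
  wlog hlt : x.val < y.val generalizing x y
  · exact this y x hxy.symm (by rw [pair_comm, hxy'])
      (by have := Fin.val_ne_of_ne hxy; omega)
  have hx0 : 0 < x.val := Nat.pos_of_ne_zero fun h =>
    ne_of_mem_erase (hxy' ▸ mem_insert_self x {y}) (Fin.ext (h.trans (Fin.val_zero n).symm))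
  have hsxy : s = {0, x, y} := by rw [← insert_erase h0, hxy']
  rw [hsxy, isCyclicIndep_zero_triple_iff hx0 hlt] at hs
  exact ⟨x, y, hs.1, hs.2.1, hs.2.2, hsxy⟩

open Fin.NatCast in
/-- The triples are `{0, a + 2, b + 3}` with `a < b < n - 4`. -/
lemma two_mul_card_shape_zero_three (hn : 4 ≤ n) :
    2 * #(shape {(0 : Fin n)} 3) = (n - 4) * (n - 5) := by
  have hval {m : ℕ} (hm : m < n) : ((m : Fin n) : ℕ) = m := Fin.val_cast_of_lt hm
  rw [show n - 5 = n - 4 - 1 by omega, ← sum_range_id_mul_two, mul_comm,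
    card_shape_eq_card_isCyclicIndep]
  congr 1
  rw [show ∑ b ∈ range (n - 4), b = #((range (n - 4)).sigma fun b => range b) by simp]
  symm
  refine card_bij (fun p _ => {0, ((p.2 + 2 : ℕ) : Fin n), ((p.1 + 3 : ℕ) : Fin n)})
    (fun ⟨b, a⟩ hp => ?_) (fun ⟨b, a⟩ hp ⟨b', a'⟩ hp' h => ?_) (fun s hs => ?_)
  · simp only [mem_sigma, mem_range] at hp
    have hx : ((a + 2 : ℕ) : Fin n).val = a + 2 := hval (by omega)
    have hy : ((b + 3 : ℕ) : Fin n).val = b + 3 := hval (by omega)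
    generalize ((a + 2 : ℕ) : Fin n) = x at hx ⊢
    generalize ((b + 3 : ℕ) : Fin n) = y at hy ⊢
    simp only [mem_filter, mem_univ, true_and, singleton_subset_iff, mem_insert_self,
      isCyclicIndep_zero_triple_iff (by omega : 0 < x.val) (by omega : x.val < y.val),
      card_zero_triple (by omega : 0 < x.val) (by omega : x.val < y.val), and_true]
    omega
  · simp only [mem_sigma, mem_range] at hp hp'
    have hx : ((a + 2 : ℕ) : Fin n).val = a + 2 := hval (by omega)
    have hy : ((b + 3 : ℕ) : Fin n).val = b + 3 := hval (by omega)
    have hx' : ((a' + 2 : ℕ) : Fin n).val = a' + 2 := hval (by omega)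
    have hy' : ((b' + 3 : ℕ) : Fin n).val = b' + 3 := hval (by omega)
    generalize ((a + 2 : ℕ) : Fin n) = x at hx h
    generalize ((b + 3 : ℕ) : Fin n) = y at hy h
    generalize ((a' + 2 : ℕ) : Fin n) = x' at hx' h
    generalize ((b' + 3 : ℕ) : Fin n) = y' at hy' h
    obtain ⟨rfl, rfl⟩ := eq_of_zero_triple_eq (by omega) (by omega) (by omega) (by omega) h
    simp only [Sigma.mk.injEq, heq_eq_eq]
    omega
  · simp only [mem_filter, mem_univ, true_and, singleton_subset_iff] at hs
    obtain ⟨x, y, hx, hxy, hy, rfl⟩ := exists_eq_zero_triple hs.1 hs.2.1 hs.2.2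
    refine ⟨⟨y.val - 3, x.val - 2⟩, by simp; omega, ?_⟩
    simp only [Nat.sub_add_cancel (by omega : 2 ≤ x.val),
      Nat.sub_add_cancel (by omega : 3 ≤ y.val), Fin.cast_val_eq_self]

variable {C : Set (Vertex n)}

lemma empty_notMem (hn : 4 ≤ n) (hC : IsPerfectCode (lucasCube n) C) : empty ∉ C := by
  intro h₀
  have hone : ∀ c ∈ C, #(support c) ≠ 1 := fun c hc h =>
    hC.not_adj h₀ hc (empty_adj_of_card_eq_one h)
  have htwo : ∀ c ∈ C, #(support c) ≠ 2 := by
    intro c hc h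
    obtain ⟨x, hx⟩ : (support c).Nonempty := card_pos.1 (by omega)
    let v := ofFinset {x} ((isCyclicIndep_support c).mono (singleton_subset_iff.2 hx))
    have hv : #(support v) = 1 := by simp [v]
    have hvc : (lucasCube n).Adj v c := adj_of_subset (by simpa [v] using hx) (by rw [hv, h])
    have := hC.eq_of_mem_of_mem h₀ (.inr (empty_adj_of_card_eq_one hv).symm) hc (.inr hvc)
    simp [← this] at h
  have h₂ := card_shape_eq_of_isPerfectCode hC (A := {0}) (k := 2)
    (not_covBy_of_card_ne fun c hc h => hone c hc (by omega))
  have h₃ := card_shape_eq_of_isPerfectCode hC (A := {0}) (k := 3)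
    (not_covBy_of_card_ne fun c hc h => htwo c hc (by omega))
  have hnone : #{c ∈ shape {(0 : Fin n)} 2 | c ∈ C} = 0 :=
    card_eq_zero.2 <| filter_eq_empty_iff.2 fun c hc hcC => htwo c hcC (mem_shape.1 hc).2
  simp only [Nat.reduceAdd, card_singleton] at h₂ h₃
  rw [card_shape_singleton_two (by omega), hnone] at h₂
  have h₃' := two_mul_card_shape_zero_three hn
  rw [h₃] at h₃'
  exact sub_four_mul_sub_five_ne n #{c ∈ shape {(0 : Fin n)} 4 | c ∈ C} hn (by omega)

lemma card_support_ne_one (hn : 4 ≤ n) (hC : IsPerfectCode (lucasCube n) C)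
    {c₀ : Vertex n} (hc₀ : c₀ ∈ C) : #(support c₀) ≠ 1 := by
  intro hc₀₁
  obtain ⟨a, ha⟩ := card_eq_one.1 hc₀₁
  have hone : ∀ c ∈ C, #(support c) = 1 → c = c₀ := fun c hc h =>
    hC.eq_of_mem_of_mem hc (.inr (empty_adj_of_card_eq_one h)) hc₀
      (.inr (empty_adj_of_card_eq_one hc₀₁))
  have hzero : ∀ c ∈ C, #(support c) + 1 ≠ 1 := fun c hc h => by
    rw [eq_empty_iff.2 (card_eq_zero.1 (by omega : #(support c) = 0))] at hc
    exact empty_notMem hn hC hc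
  have hodd :=
    card_shape_eq_of_isPerfectCode hC (A := ∅) (k := 1) (not_covBy_of_card_ne hzero)
  have hsingle : {c ∈ shape (∅ : Finset (Fin n)) 1 | c ∈ C} = {c₀} := by
    ext c
    simp only [mem_filter, mem_shape, empty_subset, true_and, mem_singleton]
    exact ⟨fun h => hone c h.2 h.1, fun h => h ▸ ⟨hc₀₁, hc₀⟩⟩
  have hcover :=
    card_shape_eq_of_isPerfectCode hC (A := {a + 1}) (k := 1) (not_covBy_of_card_ne hzero)
  have hnone : {c ∈ shape {a + 1} 1 | c ∈ C} = ∅ := by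
    refine filter_eq_empty_iff.2 fun c hc hcC => ?_
    obtain ⟨hac, hc1⟩ := mem_shape.1 hc
    have := singleton_subset_iff.1 hac
    rw [hone c hcC hc1, ha, mem_singleton] at this
    exact add_one_ne_self (by omega) a this
  have heven := card_shape_eq_of_isPerfectCode hC (A := {a + 1}) (k := 2) fun c hc v hv hcv => by
    obtain ⟨hav, hv2⟩ := mem_shape.1 hv
    have hc1 : #(support c) = 1 := by have := hcv.card_finset_eq; omega
    have hac : a ∈ support v := hcv.le (by rw [hone c hc hc1, ha]; exact mem_singleton_self a)
    exact isCyclicIndep_support v a hac (singleton_subset_iff.1 hav)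
  simp only [Nat.reduceAdd, card_singleton, card_empty] at hodd hcover heven
  rw [card_shape_empty_one (by omega), hsingle, card_singleton] at hodd
  rw [card_shape_singleton_one (by omega), hnone, card_empty] at hcover
  rw [card_shape_singleton_two (by omega)] at heven
  omega

theorem not_exists_isPerfectCode (hn : 4 ≤ n) :
    ¬ ∃ C : Set (Vertex n), IsPerfectCode (lucasCube n) C := by
  rintro ⟨C, hC⟩
  obtain ⟨c, ⟨hc, rfl | hadj⟩, -⟩ := hC empty
  · exact empty_notMem hn hC hc
  rcases adj_iff_covBy.1 hadj with h | h
  · exact card_support_ne_one hn hC hc (by simpa using h.card_finset_eq)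
  · simpa using h.card_finset_eq

end NeZero

lemma card_support_le_one (hn : n ≤ 3) (v : Vertex n) : #(support v) ≤ 1 := by
  by_contra! h
  obtain ⟨x, hx, y, hy, hxy⟩ := one_lt_card.1 h
  have : NeZero n := ⟨x.pos.ne'⟩
  have hxy' : y = x + 1 ∨ x = y + 1 := by
    have hx₁ := Fin.val_add_one_eq_ite x
    have hy₁ := Fin.val_add_one_eq_ite y
    have := Fin.val_ne_of_ne hxy
    simp only [Fin.ext_iff]
    split_ifs at hx₁ hy₁ <;> omega
  rcases hxy' with rfl | rfl
  · exact isCyclicIndep_support v x hx hy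
  · exact isCyclicIndep_support v y hy hx

theorem isPerfectCode_empty (hn : n ≤ 3) : IsPerfectCode (lucasCube n) {empty} := by
  refine fun v => ⟨empty, ⟨rfl, ?_⟩, fun c hc => hc.1⟩
  by_cases hv : support v = ∅
  · exact .inl (eq_empty_iff.2 hv)
  · refine .inr (empty_adj_of_card_eq_one ?_).symm
    have := card_support_le_one hn v
    have := card_pos.2 (nonempty_iff_ne_empty.2 hv)
    omega

end LucasCube

/-- For n ≥ 4 the Lucas cube Λ_n admits no perfect code; combined with the easy
cases, Λ_n admits a perfect code if and only if n ≤ 3. -/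
theorem stmt16 (n : ℕ) :
    (4 ≤ n → ¬ ∃ C : Set {b : Fin n → Bool // isLucas b}, IsPerfectCode (lucasCube n) C)
    ∧ ((∃ C : Set {b : Fin n → Bool // isLucas b}, IsPerfectCode (lucasCube n) C) ↔ n ≤ 3) := by
  have hlarge (hn : 4 ≤ n) := by
    have : NeZero n := ⟨by omega⟩
    exact LucasCube.not_exists_isPerfectCode hn
  exact ⟨hlarge, fun h => not_lt.1 fun hn => hlarge hn h,
    fun hn => ⟨_, LucasCube.isPerfectCode_empty hn⟩⟩
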